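/- arXiv:2111.00039 — 4 statements merged into one kernel-verified Lean document; each statement's English description precedes it below -/
import Mathlib

section
/- Let 𝒜 be a subspace of linear maps from Fⁿ to Fⁿ and let c be the maximum over all subspaces U ⊆ Fⁿ of dim U − dim 𝒜(U). If U₁ and U₂ both attain this maximum, then U₁ ∩ U₂ and U₁ + U₂ also attain this maximum. -/
open Module

/-- The image subspace `𝒜(U)`: the span of all `A u` with `A ∈ 𝒜`, `u ∈ U`. -/
def mapSpan {F V W : Type*} [Field F] [AddCommGroup V] [Module F V]
    [AddCommGroup W] [Module F W]
    (𝒜 : Submodule F (V →ₗ[F] W)) (U : Submodule F V) : Submodule F W :=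
  Submodule.span F {w | ∃ A ∈ 𝒜, ∃ u ∈ U, A u = w}

/-! The shrinkage `dim U - dim 𝒜(U)` is supermodular in `U`, because `U ↦ dim U` is modular
and `U ↦ dim 𝒜(U)` is submodular (`𝒜(·)` preserves joins and is monotone). So if `U₁` and `U₂`
attain the maximum `c`, then the shrinkages of `U₁ ⊓ U₂` and `U₁ ⊔ U₂` are at most `c` and sum
to at least `2c`. -/

namespace mapSpan

variable {F V W : Type*} [Field F] [AddCommGroup V] [Module F V] [AddCommGroup W] [Module F W]
  (𝒜 : Submodule F (V →ₗ[F] W))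

theorem mono {U U' : Submodule F V} (h : U ≤ U') : mapSpan 𝒜 U ≤ mapSpan 𝒜 U' := by
  apply Submodule.span_mono
  rintro w ⟨A, hA, u, hu, rfl⟩
  exact ⟨A, hA, u, h hu, rfl⟩

theorem sup_eq (U₁ U₂ : Submodule F V) :
    mapSpan 𝒜 (U₁ ⊔ U₂) = mapSpan 𝒜 U₁ ⊔ mapSpan 𝒜 U₂ := by
  refine le_antisymm (Submodule.span_le.2 ?_) (sup_le (mono 𝒜 le_sup_left) (mono 𝒜 le_sup_right))
  rintro w ⟨A, hA, u, hu, rfl⟩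
  obtain ⟨x, hx, y, hy, rfl⟩ := Submodule.mem_sup.1 hu
  rw [map_add]
  exact Submodule.add_mem_sup (Submodule.subset_span ⟨A, hA, x, hx, rfl⟩)
    (Submodule.subset_span ⟨A, hA, y, hy, rfl⟩)

theorem inf_le (U₁ U₂ : Submodule F V) :
    mapSpan 𝒜 (U₁ ⊓ U₂) ≤ mapSpan 𝒜 U₁ ⊓ mapSpan 𝒜 U₂ :=
  le_inf (mono 𝒜 inf_le_left) (mono 𝒜 inf_le_right)

theorem finrank_inf_add_finrank_sup_le [FiniteDimensional F W] (U₁ U₂ : Submodule F V) :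
    finrank F (mapSpan 𝒜 (U₁ ⊓ U₂)) + finrank F (mapSpan 𝒜 (U₁ ⊔ U₂)) ≤
      finrank F (mapSpan 𝒜 U₁) + finrank F (mapSpan 𝒜 U₂) := by
  rw [sup_eq, ← Submodule.finrank_sup_add_finrank_inf_eq (mapSpan 𝒜 U₁), add_comm]
  exact Nat.add_le_add_left (Submodule.finrank_mono (inf_le 𝒜 U₁ U₂)) _

theorem shrinkage_add_le [FiniteDimensional F V] [FiniteDimensional F W]
    (U₁ U₂ : Submodule F V) :
    ((finrank F U₁ : ℤ) - finrank F (mapSpan 𝒜 U₁)) +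
        ((finrank F U₂ : ℤ) - finrank F (mapSpan 𝒜 U₂)) ≤
      ((finrank F ↥(U₁ ⊓ U₂) : ℤ) - finrank F (mapSpan 𝒜 (U₁ ⊓ U₂))) +
        ((finrank F ↥(U₁ ⊔ U₂) : ℤ) - finrank F (mapSpan 𝒜 (U₁ ⊔ U₂))) := by
  have hU := Submodule.finrank_sup_add_finrank_inf_eq U₁ U₂
  have hM := finrank_inf_add_finrank_sup_le 𝒜 U₁ U₂
  omega

end mapSpan

theorem inf_sup_of_max_shrunk {F : Type*} [Field F] {n : ℕ}
    (𝒜 : Submodule F ((Fin n → F) →ₗ[F] (Fin n → F))) (c : ℤ)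
    (hmax : ∀ U : Submodule F (Fin n → F),
      (finrank F U : ℤ) - finrank F (mapSpan 𝒜 U) ≤ c)
    (U₁ U₂ : Submodule F (Fin n → F))
    (h₁ : (finrank F U₁ : ℤ) - finrank F (mapSpan 𝒜 U₁) = c)
    (h₂ : (finrank F U₂ : ℤ) - finrank F (mapSpan 𝒜 U₂) = c) :
    (finrank F ↥(U₁ ⊓ U₂) : ℤ) - finrank F (mapSpan 𝒜 (U₁ ⊓ U₂)) = c ∧
    (finrank F ↥(U₁ ⊔ U₂) : ℤ) - finrank F (mapSpan 𝒜 (U₁ ⊔ U₂)) = c := by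
  have hsum := mapSpan.shrinkage_add_le 𝒜 U₁ U₂
  have hinf := hmax (U₁ ⊓ U₂)
  have hsup := hmax (U₁ ⊔ U₂)
  constructor <;> linarith
end

section
/- Let 𝒜 be a subspace of linear maps Fⁿ → Fⁿ, c maximal with a c-shrunk subspace existing, and let U be the minimal c-shrunk subspace. Then for every invertible linear map T: Fⁿ → Fⁿ such that A ∘ T ∈ 𝒜 for all A ∈ 𝒜, we have T(U) = U. -/
/-! Precomposition with `T` is a linear automorphism of `Hom(Fⁿ, Fⁿ)` mapping the
finite-dimensional space `𝒜` into itself, hence onto itself, so `𝒜 ∘ T⁻¹ ⊆ 𝒜` as well. Consequently `T⁻¹(U)` has the same image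
`𝒜(T⁻¹ U) = 𝒜(U)` and the same dimension as `U`, so it is again `c`-shrunk; minimality gives
`U ≤ T⁻¹(U)`, and equality of dimensions turns this into `T(U) = U`. -/

open Module

/-- `U` is a `c`-shrunk subspace of `𝒜`. -/
def IsShrunk {F V : Type*} [Field F] [AddCommGroup V] [Module F V]
    (𝒜 : Submodule F (V →ₗ[F] V)) (c : ℤ) (U : Submodule F V) : Prop :=
  (finrank F U : ℤ) - finrank F (mapSpan 𝒜 U) = c

section

variable {F V W : Type*} [Field F] [AddCommGroup V] [Module F V] [AddCommGroup W] [Module F W]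

theorem Submodule.comp_symm_mem_of_forall_comp_mem [FiniteDimensional F V]
    [FiniteDimensional F W] {𝒜 : Submodule F (V →ₗ[F] W)} {T : V ≃ₗ[F] V}
    (hT : ∀ A ∈ 𝒜, A ∘ₗ T.toLinearMap ∈ 𝒜) :
    ∀ B ∈ 𝒜, B ∘ₗ T.symm.toLinearMap ∈ 𝒜 := by
  let precomp : (V →ₗ[F] W) ≃ₗ[F] (V →ₗ[F] W) := T.symm.arrowCongr (LinearEquiv.refl F W)
  have hle : 𝒜.map precomp.toLinearMap ≤ 𝒜 := by
    rintro _ ⟨A, hA, rfl⟩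
    exact hT A hA
  have heq : 𝒜.map precomp.toLinearMap = 𝒜 :=
    Submodule.eq_of_le_of_finrank_eq hle (LinearEquiv.finrank_map_eq precomp 𝒜)
  intro B hB
  obtain ⟨A, hA, rfl⟩ : B ∈ 𝒜.map precomp.toLinearMap := by rwa [heq]
  have hcancel : precomp.toLinearMap A ∘ₗ T.symm.toLinearMap = A := by
    ext x
    simp [precomp]
  rwa [hcancel]

theorem mapSpan_map_le {𝒜 : Submodule F (V →ₗ[F] W)} {T : V →ₗ[F] V}
    (hT : ∀ A ∈ 𝒜, A ∘ₗ T ∈ 𝒜) (U : Submodule F V) :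
    mapSpan 𝒜 (U.map T) ≤ mapSpan 𝒜 U := by
  refine Submodule.span_le.mpr ?_
  rintro _ ⟨A, hA, _, ⟨u, hu, rfl⟩, rfl⟩
  exact Submodule.subset_span ⟨A ∘ₗ T, hT A hA, u, hu, rfl⟩

theorem mapSpan_map_linearEquiv {𝒜 : Submodule F (V →ₗ[F] W)} {T : V ≃ₗ[F] V}
    (hT : ∀ A ∈ 𝒜, A ∘ₗ T.toLinearMap ∈ 𝒜) (hT' : ∀ A ∈ 𝒜, A ∘ₗ T.symm.toLinearMap ∈ 𝒜)
    (U : Submodule F V) :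
    mapSpan 𝒜 (U.map T.toLinearMap) = mapSpan 𝒜 U := by
  refine le_antisymm (mapSpan_map_le hT U) ?_
  calc mapSpan 𝒜 U = mapSpan 𝒜 ((U.map T.toLinearMap).map T.symm.toLinearMap) := by
        rw [(Submodule.map_symm_eq_iff T).mpr rfl]
    _ ≤ mapSpan 𝒜 (U.map T.toLinearMap) := mapSpan_map_le hT' _

end

theorem IsShrunk.map_linearEquiv {F V : Type*} [Field F] [AddCommGroup V] [Module F V]
    {𝒜 : Submodule F (V →ₗ[F] V)} {c : ℤ} {U : Submodule F V} (hU : IsShrunk 𝒜 c U)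
    {T : V ≃ₗ[F] V} (hT : ∀ A ∈ 𝒜, A ∘ₗ T.toLinearMap ∈ 𝒜)
    (hT' : ∀ A ∈ 𝒜, A ∘ₗ T.symm.toLinearMap ∈ 𝒜) :
    IsShrunk 𝒜 c (U.map T.toLinearMap) := by
  rw [IsShrunk, mapSpan_map_linearEquiv hT hT', LinearEquiv.finrank_map_eq]
  exact hU

theorem minimal_shrunk_fixed_by_automorphism_general {F : Type*} [Field F] {n : ℕ}
    (𝒜 : Submodule F ((Fin n → F) →ₗ[F] (Fin n → F))) (c : ℤ)
    (U : Submodule F (Fin n → F))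
    (hU : IsShrunk 𝒜 c U)
    (hUmin : ∀ U' : Submodule F (Fin n → F), IsShrunk 𝒜 c U' → U ≤ U')
    (T : (Fin n → F) ≃ₗ[F] (Fin n → F))
    (hT : ∀ A ∈ 𝒜, A ∘ₗ (T : (Fin n → F) →ₗ[F] (Fin n → F)) ∈ 𝒜) :
    Submodule.map (T : (Fin n → F) →ₗ[F] (Fin n → F)) U = U := by
  have hT' := Submodule.comp_symm_mem_of_forall_comp_mem hT
  have hle : U ≤ U.map T.symm.toLinearMap := hUmin _ (hU.map_linearEquiv hT' hT)
  have hfixed : U.map T.symm.toLinearMap = U :=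
    (Submodule.eq_of_le_of_finrank_eq hle (LinearEquiv.finrank_map_eq T.symm U).symm).symm
  exact (Submodule.map_symm_eq_iff T).mp hfixed

theorem minimal_shrunk_fixed_by_automorphism {F : Type*} [Field F] {n : ℕ}
    (𝒜 : Submodule F ((Fin n → F) →ₗ[F] (Fin n → F))) (c : ℤ)
    (hmax : IsGreatest {d : ℤ | ∃ U : Submodule F (Fin n → F),
      (finrank F U : ℤ) - finrank F (mapSpan 𝒜 U) = d} c)
    (U : Submodule F (Fin n → F))
    (hU : IsShrunk 𝒜 c U)
    (hUmin : ∀ U' : Submodule F (Fin n → F), IsShrunk 𝒜 c U' → U ≤ U')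
    (T : (Fin n → F) ≃ₗ[F] (Fin n → F))
    (hT : ∀ A ∈ 𝒜, A ∘ₗ (T : (Fin n → F) →ₗ[F] (Fin n → F)) ∈ 𝒜) :
    Submodule.map (T : (Fin n → F) →ₗ[F] (Fin n → F)) U = U :=
  minimal_shrunk_fixed_by_automorphism_general 𝒜 c U hU hUmin T hT
end

section
/- Let Q be a quiver with finitely many vertices and arrows, W a finite-dimensional representation of Q over a field F, and σ : Q₀ → ℤ a weight. Let c be the maximum of σ(dim W') over all subrepresentations W' of W. If W₁ and W₂ are subrepresentations attaining this maximum, then so are W₁ ∩ W₂ and W₁ + W₂. -/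
open Module

variable {F : Type*} [Field F] {ι κ : Type*}

/-- A family of subspaces is a subrepresentation of the representation given by
the vertex spaces `Wsp` and the arrow maps `Wmap` (arrows indexed by `κ`, with
tail `t a` and head `h a`). -/
def IsSubrep {ι κ : Type*} {F : Type*} [Field F] {Wsp : ι → Type*}
    [∀ i, AddCommGroup (Wsp i)] [∀ i, Module F (Wsp i)]
    (t h : κ → ι) (Wmap : ∀ a : κ, Wsp (t a) →ₗ[F] Wsp (h a))
    (W' : ∀ i, Submodule F (Wsp i)) : Prop :=
  ∀ a : κ, (W' (t a)).map (Wmap a) ≤ W' (h a)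

/-- `σ(dim W') = Σ_x σ(x)·dim W'(x)`. -/
noncomputable def sigmaDim {ι : Type*} [Fintype ι] {F : Type*} [Field F] {Wsp : ι → Type*}
    [∀ i, AddCommGroup (Wsp i)] [∀ i, Module F (Wsp i)]
    (σ : ι → ℤ) (W' : ∀ i, Submodule F (Wsp i)) : ℤ :=
  ∑ i, σ i * (finrank F (W' i) : ℤ)

/-
`W' ↦ σ(dim W')` is a modular function on the lattice of subrepresentations, since
`dim (W₁ ∩ W₂) + dim (W₁ + W₂) = dim W₁ + dim W₂` holds at every vertex. Intersections and sums of
subrepresentations are subrepresentations, so if `W₁` and `W₂` both attain the maximum `c`, then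
`σ(dim (W₁ ∩ W₂)) + σ(dim (W₁ + W₂)) = 2c` with both terms at most `c`, forcing equality in each.
-/

section Subrep

variable {Wsp : ι → Type*} [∀ i, AddCommGroup (Wsp i)] [∀ i, Module F (Wsp i)]
  {t h : κ → ι} {Wmap : ∀ a : κ, Wsp (t a) →ₗ[F] Wsp (h a)} {W₁ W₂ : ∀ i, Submodule F (Wsp i)}

theorem IsSubrep.inf (h₁ : IsSubrep t h Wmap W₁) (h₂ : IsSubrep t h Wmap W₂) :
    IsSubrep t h Wmap (W₁ ⊓ W₂) := fun a =>
  (Submodule.map_inf_le _).trans (inf_le_inf (h₁ a) (h₂ a))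

theorem IsSubrep.sup (h₁ : IsSubrep t h Wmap W₁) (h₂ : IsSubrep t h Wmap W₂) :
    IsSubrep t h Wmap (W₁ ⊔ W₂) := fun a =>
  (Submodule.map_sup _ _ _).trans_le (sup_le_sup (h₁ a) (h₂ a))

end Subrep

theorem sigmaDim_inf_add_sigmaDim_sup [Fintype ι] {Wsp : ι → Type*}
    [∀ i, AddCommGroup (Wsp i)] [∀ i, Module F (Wsp i)] (σ : ι → ℤ)
    (W₁ W₂ : ∀ i, Submodule F (Wsp i))
    [∀ i, FiniteDimensional F ↥(W₁ i)] [∀ i, FiniteDimensional F ↥(W₂ i)] :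
    sigmaDim σ (W₁ ⊓ W₂) + sigmaDim σ (W₁ ⊔ W₂) = sigmaDim σ W₁ + sigmaDim σ W₂ := by
  simp only [sigmaDim, ← Finset.sum_add_distrib, ← mul_add]
  refine Finset.sum_congr rfl fun i _ => congrArg (σ i * ·) ?_
  exact_mod_cast (add_comm _ _).trans (Submodule.finrank_sup_add_finrank_inf_eq (W₁ i) (W₂ i))

theorem optimal_witness_inf_sup_general [Fintype ι]
    {Wsp : ι → Type*} [∀ i, AddCommGroup (Wsp i)] [∀ i, Module F (Wsp i)]
    [∀ i, FiniteDimensional F (Wsp i)]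
    (t h : κ → ι) (Wmap : ∀ a : κ, Wsp (t a) →ₗ[F] Wsp (h a))
    (σ : ι → ℤ) (c : ℤ)
    (hmax : ∀ W' : ∀ i, Submodule F (Wsp i), IsSubrep t h Wmap W' →
      sigmaDim σ W' ≤ c)
    (W₁ W₂ : ∀ i, Submodule F (Wsp i))
    (h₁ : IsSubrep t h Wmap W₁) (h₂ : IsSubrep t h Wmap W₂)
    (hc₁ : sigmaDim σ W₁ = c) (hc₂ : sigmaDim σ W₂ = c) :
    (IsSubrep t h Wmap (fun i => W₁ i ⊓ W₂ i) ∧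
      sigmaDim σ (fun i => W₁ i ⊓ W₂ i) = c) ∧
    (IsSubrep t h Wmap (fun i => W₁ i ⊔ W₂ i) ∧
      sigmaDim σ (fun i => W₁ i ⊔ W₂ i) = c) := by
  have hinf : IsSubrep t h Wmap (fun i => W₁ i ⊓ W₂ i) := h₁.inf h₂
  have hsup : IsSubrep t h Wmap (fun i => W₁ i ⊔ W₂ i) := h₁.sup h₂
  have hmod : sigmaDim σ (fun i => W₁ i ⊓ W₂ i) + sigmaDim σ (fun i => W₁ i ⊔ W₂ i) =
      sigmaDim σ W₁ + sigmaDim σ W₂ :=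
    sigmaDim_inf_add_sigmaDim_sup σ W₁ W₂
  have hinf_le := hmax _ hinf
  have hsup_le := hmax _ hsup
  exact ⟨⟨hinf, by omega⟩, ⟨hsup, by omega⟩⟩

theorem optimal_witness_inf_sup [Fintype ι] [Fintype κ]
    {Wsp : ι → Type*} [∀ i, AddCommGroup (Wsp i)] [∀ i, Module F (Wsp i)]
    [∀ i, FiniteDimensional F (Wsp i)]
    (t h : κ → ι) (Wmap : ∀ a : κ, Wsp (t a) →ₗ[F] Wsp (h a))
    (σ : ι → ℤ) (c : ℤ)
    (hmax : ∀ W' : ∀ i, Submodule F (Wsp i), IsSubrep t h Wmap W' →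
      sigmaDim σ W' ≤ c)
    (W₁ W₂ : ∀ i, Submodule F (Wsp i))
    (h₁ : IsSubrep t h Wmap W₁) (h₂ : IsSubrep t h Wmap W₂)
    (hc₁ : sigmaDim σ W₁ = c) (hc₂ : sigmaDim σ W₂ = c) :
    (IsSubrep t h Wmap (fun i => W₁ i ⊓ W₂ i) ∧
      sigmaDim σ (fun i => W₁ i ⊓ W₂ i) = c) ∧
    (IsSubrep t h Wmap (fun i => W₁ i ⊔ W₂ i) ∧
      sigmaDim σ (fun i => W₁ i ⊔ W₂ i) = c) :=
  optimal_witness_inf_sup_general t h Wmap σ c hmax W₁ W₂ h₁ h₂ hc₁ hc₂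
end

section
/- Let 𝒜 ⊆ Hom(Fⁿ, Fⁿ) be a matrix space and let c* = max{dim U − dim 𝒜(U) : U ⊆ Fⁿ subspace}. Then for every d ≥ 1 and every B ∈ 𝒜^{d} = M_d(F) ⊗ 𝒜, rk(B) ≤ (n − c*)·d; equivalently, rk(𝒜^{d})/d ≤ n − c* for all d. -/
/-!
Choose `U` attaining `c* = dim U - dim 𝒜(U)`. Every `A ⊗ X` maps `U ⊗ F^d` into `𝒜(U) ⊗ F^d`,
hence so does every `B ∈ 𝒜^{d}`. Splitting `Fⁿ ⊗ F^d` as `U ⊗ F^d` plus a complement of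
dimension `(n - dim U) d` gives `rk B ≤ dim 𝒜(U) · d + (n - dim U) d = (n - c*) d`.
-/

open Module TensorProduct

/-- The `d`-th tensor blow-up `𝒜^{d}`, acting on `V ⊗ F^d`: the span of the maps
`A ⊗ X` with `A ∈ 𝒜` and `X ∈ M_d(F)`. -/
noncomputable def tensorBlowUp {F V : Type*} [Field F] [AddCommGroup V] [Module F V]
    (𝒜 : Submodule F (V →ₗ[F] V)) (d : ℕ) :
    Submodule F ((V ⊗[F] (Fin d → F)) →ₗ[F] (V ⊗[F] (Fin d → F))) :=
  Submodule.span F {B | ∃ A ∈ 𝒜, ∃ X : (Fin d → F) →ₗ[F] (Fin d → F),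
    TensorProduct.map A X = B}

theorem LinearMap.finrank_range_add_finrank_le_of_map_le {K V W : Type*} [DivisionRing K]
    [AddCommGroup V] [Module K V] [AddCommGroup W] [Module K W] [FiniteDimensional K V]
    (f : V →ₗ[K] W) {U : Submodule K V} {W' : Submodule K W} [FiniteDimensional K W']
    (h : U.map f ≤ W') :
    finrank K (LinearMap.range f) + finrank K U ≤ finrank K W' + finrank K V := by
  obtain ⟨C, hC⟩ := U.exists_isCompl
  have hrange : LinearMap.range f = U.map f ⊔ C.map f := by
    rw [← Submodule.map_sup, hC.sup_eq_top, Submodule.map_top]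
  have hdim := Submodule.finrank_add_eq_of_isCompl hC
  calc finrank K (LinearMap.range f) + finrank K U
      ≤ finrank K (U.map f) + finrank K (C.map f) + finrank K U := by
        rw [hrange]; gcongr; exact Submodule.finrank_add_le_finrank_add_finrank _ _
    _ ≤ finrank K W' + finrank K C + finrank K U := by
        gcongr
        · exact Submodule.finrank_mono h
        · exact Submodule.finrank_map_le f C
    _ = finrank K W' + finrank K V := by omega

section TensorSubspace

variable {F V V' M M' : Type*} [Field F] [AddCommGroup V] [Module F V] [AddCommGroup V']
  [Module F V'] [AddCommGroup M] [Module F M] [AddCommGroup M'] [Module F M']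

theorem finrank_range_rTensor_subtype [FiniteDimensional F M] (U : Submodule F V)
    [FiniteDimensional F U] :
    finrank F (LinearMap.range (U.subtype.rTensor M)) = finrank F U * finrank F M := by
  rw [LinearMap.finrank_range_of_inj
    (Module.Flat.rTensor_preserves_injective_linearMap _ U.injective_subtype),
    finrank_tensorProduct]

theorem map_range_rTensor_subtype_le {A : V →ₗ[F] V'} {U : Submodule F V} {W : Submodule F V'}
    (h : U.map A ≤ W) (X : M →ₗ[F] M') :
    (LinearMap.range (U.subtype.rTensor M)).map (TensorProduct.map A X)
      ≤ LinearMap.range (W.subtype.rTensor M') := by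
  have hAU : ∀ u ∈ U, A u ∈ W := fun u hu => h ⟨u, hu, rfl⟩
  have hfactor : (TensorProduct.map A X).comp (U.subtype.rTensor M)
      = (W.subtype.rTensor M').comp (TensorProduct.map (A.restrict hAU) X) := by
    rw [LinearMap.map_comp_rTensor, LinearMap.rTensor, ← TensorProduct.map_comp]
    rfl
  rw [← LinearMap.range_comp, hfactor]
  exact LinearMap.range_comp_le_range _ _

end TensorSubspace

theorem map_le_mapSpan {F V W : Type*} [Field F] [AddCommGroup V] [Module F V]
    [AddCommGroup W] [Module F W] {𝒜 : Submodule F (V →ₗ[F] W)} {A : V →ₗ[F] W} (hA : A ∈ 𝒜)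
    (U : Submodule F V) : U.map A ≤ mapSpan 𝒜 U := by
  rintro _ ⟨u, hu, rfl⟩
  exact Submodule.subset_span ⟨A, hA, u, hu, rfl⟩

theorem tensorBlowUp_le_compatibleMaps {F V : Type*} [Field F] [AddCommGroup V] [Module F V]
    (𝒜 : Submodule F (V →ₗ[F] V)) (d : ℕ) (U : Submodule F V) :
    tensorBlowUp 𝒜 d ≤ Submodule.compatibleMaps
      (LinearMap.range (U.subtype.rTensor (Fin d → F)))
      (LinearMap.range ((mapSpan 𝒜 U).subtype.rTensor (Fin d → F))) := by
  rw [tensorBlowUp, Submodule.span_le]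
  rintro _ ⟨A, hA, X, rfl⟩
  exact Submodule.map_le_iff_le_comap.mp (map_range_rTensor_subtype_le (map_le_mapSpan hA U) X)

theorem blowUp_rank_le_of_max_shrunk {F : Type*} [Field F] {n : ℕ}
    (𝒜 : Submodule F ((Fin n → F) →ₗ[F] (Fin n → F))) (cstar : ℤ)
    (hc : IsGreatest {d : ℤ | ∃ U : Submodule F (Fin n → F),
      d = (finrank F U : ℤ) - finrank F (mapSpan 𝒜 U)} cstar) :
    ∀ d : ℕ, 1 ≤ d → ∀ B ∈ tensorBlowUp 𝒜 d,
      (finrank F (LinearMap.range B) : ℤ) ≤ ((n : ℤ) - cstar) * d := by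
  intro d _ B hB
  obtain ⟨U, rfl⟩ := hc.1
  have hmaps := Submodule.map_le_iff_le_comap.mpr (tensorBlowUp_le_compatibleMaps 𝒜 d U hB)
  have hrank := B.finrank_range_add_finrank_le_of_map_le hmaps
  simp only [finrank_range_rTensor_subtype, finrank_tensorProduct, finrank_fin_fun] at hrank
  have hrank' : (finrank F (LinearMap.range B) : ℤ) + finrank F U * d
      ≤ finrank F (mapSpan 𝒜 U) * d + n * d := by exact_mod_cast hrank
  linarith
end
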